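/- (Ideal identity) Let H be a central arrangement on ground set I with flat F. In the polynomial ring R[I] = R[e_i : i ∈ I], one has the equality of ideals J_H + J_{H^F} + Q_{I∖F} = J_{H_F} + J_{H^F} + Q_{I∖F}, where Q_{I∖F} = ⟨e_i^2 : i ∉ F⟩, J_H is generated by Σ_{i∈I_0} a_i e_{I_0∖{i}} over all I_0 ⊆ I with Σ_{i∈I_0} a_i x_i|_V = 0, and J_{H_F}, J_{H^F} are the analogous ideals for the localization H_F (variables in F) and restriction H^F (variables in I∖F). -/
import Mathlib


open MvPolynomial

variable {I : Type} [Fintype I] [DecidableEq I]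

noncomputable def coordOn (V : Submodule ℝ (I → ℝ)) (i : I) : V →ₗ[ℝ] ℝ :=
  (LinearMap.proj i).comp V.subtype

noncomputable def relElem (I₀ : Finset I) (a : I → ℝ) : MvPolynomial I ℝ :=
  ∑ i ∈ I₀, a i • ∏ j ∈ I₀.erase i, (X j : MvPolynomial I ℝ)

/-- `J_H`: the relation ideal of the central arrangement on `V`. -/
noncomputable def JH (V : Submodule ℝ (I → ℝ)) : Ideal (MvPolynomial I ℝ) :=
  Ideal.span {p | ∃ (I₀ : Finset I) (a : I → ℝ),
    (∑ i ∈ I₀, a i • coordOn V i) = 0 ∧ p = relElem I₀ a}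

/-- `J_{H_F}`: relations of the localization at `F` (supports contained in `F`). -/
noncomputable def Jloc (V : Submodule ℝ (I → ℝ)) (F : Finset I) :
    Ideal (MvPolynomial I ℝ) :=
  Ideal.span {p | ∃ (I₀ : Finset I) (a : I → ℝ), I₀ ⊆ F ∧
    (∑ i ∈ I₀, a i • coordOn V i) = 0 ∧ p = relElem I₀ a}

/-- The coordinate subspace `ℝ^{I∖F} = {x | x_i = 0 for i ∈ F}`. -/
noncomputable def coordKer (F : Finset I) : Submodule ℝ (I → ℝ) :=
  ⨅ i ∈ F, LinearMap.ker (LinearMap.proj (R := ℝ) (φ := fun _ : I => ℝ) i)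

/-- `J_{H^F}`: relations of the restriction to the flat `F` (supports disjoint from
`F`, linear dependences among the coordinates restricted to `H_F = V ∩ ℝ^{I∖F}`). -/
noncomputable def Jres (V : Submodule ℝ (I → ℝ)) (F : Finset I) :
    Ideal (MvPolynomial I ℝ) :=
  Ideal.span {p | ∃ (I₀ : Finset I) (a : I → ℝ), Disjoint I₀ F ∧
    (∑ i ∈ I₀, a i • coordOn (V ⊓ coordKer F) i) = 0 ∧ p = relElem I₀ a}

/-- `Q_{I∖F}`: the ideal generated by `e_i²`, `i ∉ F`. -/
noncomputable def Qout (F : Finset I) : Ideal (MvPolynomial I ℝ) :=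
  Ideal.span {p | ∃ i : I, i ∉ F ∧ p = (X i : MvPolynomial I ℝ) ^ 2}

/-- `F` is a flat of the central arrangement on `V`. -/
def IsFlatC (V : Submodule ℝ (I → ℝ)) (F : Finset I) : Prop :=
  ∃ x ∈ V, ∀ i : I, i ∈ F ↔ x i = 0

/-- Factor out variables with zero coefficient. -/
lemma relElem_factor (I₀ S : Finset I) (a : I → ℝ) (hS : S ⊆ I₀)
    (hz : ∀ i ∈ I₀, i ∉ S → a i = 0) :
    relElem I₀ a = (∏ j ∈ I₀ \ S, X j) * relElem S a := by
  rw [relElem, relElem, Finset.mul_sum,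
    ← Finset.sum_subset hS (fun i hi hni => by rw [hz i hi hni, zero_smul])]
  refine Finset.sum_congr rfl fun i hi => ?_
  rw [mul_smul_comm]
  congr 1
  rw [← Finset.prod_union (Finset.sdiff_disjoint.mono_right (Finset.erase_subset _ _))]
  congr 1
  ext j
  simp only [Finset.mem_union, Finset.mem_sdiff, Finset.mem_erase]
  constructor
  · rintro ⟨hji, hj⟩
    by_cases h : j ∈ S
    · exact Or.inr ⟨hji, h⟩
    · exact Or.inl ⟨hj, h⟩
  · rintro (⟨hj, hjs⟩ | ⟨hji, hjs⟩)
    · exact ⟨fun h => hjs (h ▸ hi), hj⟩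
    · exact ⟨hji, hS hjs⟩

/-- Split of a product over `S.erase i` along a predicate holding at `i`. -/
lemma prod_erase_split (S : Finset I) (p : I → Prop) [DecidablePred p] {i : I}
    (hi : i ∈ S) (hpi : p i) :
    ∏ j ∈ S.erase i, (X j : MvPolynomial I ℝ) =
      (∏ j ∈ S.filter (fun j => ¬ p j), X j) * ∏ j ∈ (S.filter p).erase i, X j := by
  rw [← Finset.prod_union
    ((Finset.disjoint_filter_filter_not S S p).symm.mono_right
      ((Finset.erase_subset _ _)))]
  congr 1
  ext j
  simp only [Finset.mem_union, Finset.mem_filter, Finset.mem_erase]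
  constructor
  · rintro ⟨hji, hj⟩
    by_cases h : p j
    · exact Or.inr ⟨hji, hj, h⟩
    · exact Or.inl ⟨hj, h⟩
  · rintro (⟨hj, hnp⟩ | ⟨hji, hj, _⟩)
    · exact ⟨fun h => hnp (h ▸ hpi), hj⟩
    · exact ⟨hji, hj⟩

/-- Split of `relElem` along membership in `F`. -/
lemma relElem_split (S : Finset I) (a : I → ℝ) (F : Finset I) :
    relElem S a =
      (∏ j ∈ S.filter (fun i => ¬ i ∈ F), X j) *
        (∑ i ∈ S.filter (fun i => i ∈ F), a i •
          ∏ j ∈ (S.filter (fun i => i ∈ F)).erase i, (X j : MvPolynomial I ℝ))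
      + (∏ j ∈ S.filter (fun i => i ∈ F), X j) *
          relElem (S.filter (fun i => ¬ i ∈ F)) a := by
  rw [relElem, ← Finset.sum_filter_add_sum_filter_not S (fun i => i ∈ F)]
  congr 1
  · rw [Finset.mul_sum]
    refine Finset.sum_congr rfl fun i hi => ?_
    rw [mul_smul_comm]
    congr 1
    exact prod_erase_split S (fun i => i ∈ F) (Finset.filter_subset _ _ hi)
      (Finset.mem_filter.mp hi).2
  · rw [relElem, Finset.mul_sum]
    refine Finset.sum_congr rfl fun i hi => ?_
    rw [mul_smul_comm]
    congr 1
    rw [prod_erase_split S (fun i => ¬ i ∈ F) (Finset.filter_subset _ _ hi)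
      (Finset.mem_filter.mp hi).2]
    congr 2
    ext j
    simp [not_not]

lemma relElem_mem_target (V : Submodule ℝ (I → ℝ)) (F : Finset I) (I₀ : Finset I)
    (a : I → ℝ) (hrel : (∑ i ∈ I₀, a i • coordOn V i) = 0) :
    relElem I₀ a ∈ Jloc V F ⊔ Jres V F ⊔ Qout F := by
  classical
  set M := Jloc V F ⊔ Jres V F ⊔ Qout F with hM
  set S := I₀.filter (fun i => a i ≠ 0) with hSdef
  have hSsub : S ⊆ I₀ := Finset.filter_subset _ _
  have hrelS : (∑ i ∈ S, a i • coordOn V i) = 0 := by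
    rw [← hrel]
    refine Finset.sum_subset hSsub fun i hi hni => ?_
    simp only [hSdef, Finset.mem_filter, not_and, not_not] at hni
    rw [hni hi, zero_smul]
  rw [relElem_factor I₀ S a hSsub (fun i hi hni => by
    by_contra h; exact hni (Finset.mem_filter.mpr ⟨hi, h⟩))]
  refine Ideal.mul_mem_left _ _ ?_
  by_cases hSF : S ⊆ F
  · have : relElem S a ∈ Jloc V F := Ideal.subset_span ⟨S, a, hSF, hrelS, rfl⟩
    exact (le_sup_of_le_left le_sup_left : Jloc V F ≤ M) this
  · set I₁ := S.filter (fun i => i ∈ F) with hI₁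
    set I₂ := S.filter (fun i => ¬ i ∈ F) with hI₂
    obtain ⟨k, hkS, hkF⟩ := Finset.not_subset.mp hSF
    have hk : k ∈ I₂ := Finset.mem_filter.mpr ⟨hkS, hkF⟩
    have hak : a k ≠ 0 := (Finset.mem_filter.mp hkS).2
    have hdisj : Disjoint I₂ F := by
      rw [Finset.disjoint_left]
      intro i hi
      exact (Finset.mem_filter.mp hi).2
    have hrel₂ : (∑ i ∈ I₂, a i • coordOn (V ⊓ coordKer F) i) = 0 := by
      ext x
      have hxV : (x : I → ℝ) ∈ V := x.2.1
      have hxK : ∀ i ∈ F, (x : I → ℝ) i = 0 := by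
        intro i hi
        have h := x.2.2
        have h2 : (x : I → ℝ) ∈ ⨅ i ∈ F,
            LinearMap.ker (LinearMap.proj (R := ℝ) (φ := fun _ : I => ℝ) i) := h
        rw [Submodule.mem_iInf] at h2
        have h3 := h2 i
        rw [Submodule.mem_iInf] at h3
        exact LinearMap.mem_ker.mp (h3 hi)
      have h1 : ∑ i ∈ S, a i * (x : I → ℝ) i = 0 := by
        have := DFunLike.congr_fun hrelS ⟨(x : I → ℝ), hxV⟩
        simpa [coordOn, smul_eq_mul] using this
      have h2 : ∑ i ∈ I₂, a i * (x : I → ℝ) i = 0 := by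
        rw [← h1]
        refine Finset.sum_subset (Finset.filter_subset _ _) fun i hi hni => ?_
        have hiF : i ∈ F := by
          by_contra h
          exact hni (Finset.mem_filter.mpr ⟨hi, h⟩)
        rw [hxK i hiF, mul_zero]
      simpa [coordOn, smul_eq_mul] using h2
    have hmem₂ : relElem I₂ a ∈ M :=
      (le_sup_of_le_left le_sup_right : Jres V F ≤ M)
        (Ideal.subset_span ⟨I₂, a, hdisj, hrel₂, rfl⟩)
    have hXk2 : (X k : MvPolynomial I ℝ) ^ 2 ∈ M :=
      (le_sup_right : Qout F ≤ M) (Ideal.subset_span ⟨k, hkF, rfl⟩)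
    have key : (X k : MvPolynomial I ℝ) * relElem I₂ a
        = a k • (∏ j ∈ I₂, X j)
          + ∑ i ∈ I₂.erase k, a i •
              ((X k : MvPolynomial I ℝ) ^ 2 * ∏ j ∈ (I₂.erase i).erase k, X j) := by
      rw [relElem, Finset.mul_sum, ← Finset.add_sum_erase _ _ hk]
      congr 1
      · rw [mul_smul_comm, Finset.mul_prod_erase _ _ hk]
      · refine Finset.sum_congr rfl fun i hi => ?_
        have hk' : k ∈ I₂.erase i :=
          Finset.mem_erase.mpr ⟨Ne.symm (Finset.mem_erase.mp hi).1, hk⟩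
        rw [← Finset.mul_prod_erase _ _ hk']
        simp only [smul_eq_C_mul]
        ring
    have hprod : (∏ j ∈ I₂, (X j : MvPolynomial I ℝ)) ∈ M := by
      have heq : (∏ j ∈ I₂, (X j : MvPolynomial I ℝ))
          = (a k)⁻¹ • ((X k : MvPolynomial I ℝ) * relElem I₂ a
              - ∑ i ∈ I₂.erase k, a i •
                  ((X k : MvPolynomial I ℝ) ^ 2 * ∏ j ∈ (I₂.erase i).erase k, X j)) := by
        rw [key, add_sub_cancel_right, inv_smul_smul₀ hak]
      rw [heq, smul_eq_C_mul]
      refine Ideal.mul_mem_left _ _ (sub_mem (Ideal.mul_mem_left _ _ hmem₂)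
        (Ideal.sum_mem _ fun i hi => ?_))
      rw [smul_eq_C_mul]
      exact Ideal.mul_mem_left _ _ (Ideal.mul_mem_right _ _ hXk2)
    rw [relElem_split S a F]
    exact add_mem (Ideal.mul_mem_right _ _ hprod) (Ideal.mul_mem_left _ _ hmem₂)

/-- Ideal identity: for a central arrangement `H` with flat `F`,
`J_H + J_{H^F} + Q_{I∖F} = J_{H_F} + J_{H^F} + Q_{I∖F}` in `ℝ[e_i : i ∈ I]`. -/
theorem stmt15 (V : Submodule ℝ (I → ℝ)) (F : Finset I) (hF : IsFlatC V F) :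
    JH V ⊔ Jres V F ⊔ Qout F = Jloc V F ⊔ Jres V F ⊔ Qout F := by
  apply le_antisymm
  · refine sup_le (sup_le ?_ (le_sup_of_le_left le_sup_right)) le_sup_right
    rw [JH, Ideal.span_le]
    rintro p ⟨I₀, a, hrel, rfl⟩
    exact relElem_mem_target V F I₀ a hrel
  · refine sup_le (sup_le ?_ (le_sup_of_le_left le_sup_right)) le_sup_right
    refine le_sup_of_le_left (le_sup_of_le_left ?_)
    rw [Jloc, JH]
    exact Ideal.span_mono (by rintro p ⟨I₀, a, _, hrel, rfl⟩; exact ⟨I₀, a, hrel, rfl⟩)
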